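/- Second-order quantum-jump expansion: let L be an operator on a finite-dimensional Hilbert space H, let A = C² be an auxiliary qubit, and define the Hermitian operator J_L = L† ⊗ |0⟩⟨1|_A + L ⊗ |1⟩⟨0|_A on H ⊗ A. Then for the dilation channel 𝒥(t)(ρ) := Tr_A[ e^{−iJ_L√t} (ρ ⊗ |0⟩⟨0|_A) e^{iJ_L√t} ], the terms of order t^{1/2} and t^{3/2} vanish after the partial trace, and 𝒥(t)(ρ) = ρ + t( LρL† − (1/2){L†L, ρ} ) + O(t²), i.e., the first-order-in-t term equals the Lindbladian ℒ_L(ρ). -/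

import Mathlib

/-!
With `A = -i J_L` and `H(s) = e^{sA} (ρ ⊗ |0⟩⟨0|) e^{-sA}` we have `H' = [A, H]`, so
`H(s) = H(0) + s [A, H(0)] + (s²/2) [A, [A, H(0)]] + o(s²)`, and `𝒥(t)(ρ) = Tr_A H(√t)`.
`J_L` swaps the two blocks of the auxiliary qubit, so commutators with `J_L` alternate between
block-diagonal and block-off-diagonal operators; `Tr_A` sees only the diagonal blocks, hence kills
the odd commutators `[J_L, ρ ⊗ |0⟩⟨0|]` and `[J_L, [J_L, [J_L, ρ ⊗ |0⟩⟨0|]]]`, while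
`Tr_A [J_L, [J_L, ρ ⊗ |0⟩⟨0|]] = -2 ℒ_L(ρ)`. After the trace the `√t` term is gone and the
`o(s²)` remainder becomes `o(t)`.
-/

open Matrix
open scoped Kronecker

namespace Stmt16

variable {n : Type*} [Fintype n] [DecidableEq n]

/-- Partial trace over the auxiliary qubit A. -/
noncomputable def ptraceA (X : Matrix (n × Fin 2) (n × Fin 2) ℂ) : Matrix n n ℂ :=
  Matrix.of fun i j => ∑ a : Fin 2, X (i, a) (j, a)

/-- J_L = L† ⊗ |0⟩⟨1| + L ⊗ |1⟩⟨0| on H ⊗ C². -/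
def J (L : Matrix n n ℂ) : Matrix (n × Fin 2) (n × Fin 2) ℂ :=
  Lᴴ ⊗ₖ Matrix.single (0 : Fin 2) (1 : Fin 2) (1 : ℂ)
    + L ⊗ₖ Matrix.single (1 : Fin 2) (0 : Fin 2) (1 : ℂ)

/-- ρ ⊗ |0⟩⟨0|. -/
def sigma0 (ρ : Matrix n n ℂ) : Matrix (n × Fin 2) (n × Fin 2) ℂ :=
  ρ ⊗ₖ Matrix.single (0 : Fin 2) (0 : Fin 2) (1 : ℂ)

/-- The dilation channel 𝒥(t)(ρ) = Tr_A[e^{−iJ√t} (ρ ⊗ |0⟩⟨0|) e^{iJ√t}]. -/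
noncomputable def dil (L ρ : Matrix n n ℂ) (t : ℝ) : Matrix n n ℂ :=
  ptraceA (NormedSpace.exp (((-Complex.I) * ((Real.sqrt t : ℝ) : ℂ)) • J L)
    * sigma0 ρ * NormedSpace.exp ((Complex.I * ((Real.sqrt t : ℝ) : ℂ)) • J L))

/-- The Lindbladian ℒ_L(ρ) = LρL† − (1/2){L†L, ρ}. -/
noncomputable def lindbladian (L ρ : Matrix n n ℂ) : Matrix n n ℂ :=
  L * ρ * Lᴴ - (1 / 2 : ℂ) • (Lᴴ * L * ρ + ρ * (Lᴴ * L))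

open Filter Set NormedSpace Asymptotics
open scoped Topology

section

variable {E : Type*} [NormedAddCommGroup E] [NormedSpace ℝ E]

theorem isLittleO_sub_sub_sq_nhdsGE {g g' : ℝ → E} {c : E}
    (hg : ∀ s ∈ Ici (0 : ℝ), HasDerivWithinAt g (g' s) (Ici 0) s) (hg'0 : g' 0 = 0)
    (hg' : HasDerivWithinAt g' c (Ici 0) 0) :
    (fun s => g s - g 0 - (s ^ 2 / 2) • c) =o[𝓝[≥] 0] fun s => s ^ 2 := by
  have hφ : ∀ s ∈ Ici (0 : ℝ),
      HasDerivWithinAt (fun s => g s - (s ^ 2 / 2) • c) (g' s - s • c) (Ici 0) s := by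
    intro s hs
    convert (hg s hs).fun_sub (((hasDerivAt_pow 2 s).div_const 2).smul_const c).hasDerivWithinAt
      using 2
    norm_num
  have hφ' : (fun s => g' s - s • c) =o[𝓝[≥] 0] fun s => (s - 0) ^ 1 := by
    simpa [hg'0] using hg'.isLittleO
  simpa [sub_right_comm] using (convex_Ici 0).isLittleO_pow_succ_real self_mem_Ici hφ hφ'

theorem hasDerivWithinAt_comp_sqrt {g g' : ℝ → E} {c : E}
    (hg : ∀ s ∈ Ici (0 : ℝ), HasDerivWithinAt g (g' s) (Ici 0) s) (hg'0 : g' 0 = 0)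
    (hg' : HasDerivWithinAt g' c (Ici 0) 0) :
    HasDerivWithinAt (fun t => g √t) ((2 : ℝ)⁻¹ • c) (Ici 0) 0 := by
  have hsqrt : Tendsto Real.sqrt (𝓝[≥] 0) (𝓝[≥] 0) := by
    simpa using Real.continuous_sqrt.continuousWithinAt.tendsto_nhdsWithin
      (fun t _ => Real.sqrt_nonneg t) (x := 0) (s := Ici 0) (t := Ici 0)
  rw [hasDerivWithinAt_iff_isLittleO]
  refine ((isLittleO_sub_sub_sq_nhdsGE hg hg'0 hg').comp_tendsto hsqrt).congr' ?_ ?_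
  all_goals filter_upwards [self_mem_nhdsWithin] with t (ht : 0 ≤ t)
  · simp [Real.sq_sqrt ht, smul_smul, div_eq_mul_inv]
  · simp [Real.sq_sqrt ht]

end

section

variable {𝔸 : Type*} [NormedRing 𝔸] [NormedAlgebra ℝ 𝔸] [CompleteSpace 𝔸]

theorem hasDerivAt_exp_smul_mul_mul_exp_neg_smul (a x : 𝔸) (s : ℝ) :
    HasDerivAt (fun s : ℝ => exp (s • a) * x * exp (-(s • a)))
      ⁅a, exp (s • a) * x * exp (-(s • a))⁆ s := by
  have h := ((hasDerivAt_exp_smul_const' a s).mul_const x).fun_mul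
    (hasDerivAt_exp_smul_const (-a) s)
  simp only [smul_neg] at h
  convert h using 1
  rw [Ring.lie_def]
  noncomm_ring

variable {E : Type*} [NormedAddCommGroup E] [NormedSpace ℝ E]

theorem hasDerivWithinAt_map_exp_conj_sqrt (f : 𝔸 →L[ℝ] E) {a x : 𝔸} (h : f ⁅a, x⁆ = 0) :
    HasDerivWithinAt (fun t : ℝ => f (exp (√t • a) * x * exp (-(√t • a))))
      ((2 : ℝ)⁻¹ • f ⁅a, ⁅a, x⁆⁆) (Ici 0) 0 := by
  set H := fun s : ℝ => exp (s • a) * x * exp (-(s • a))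
  have hH := hasDerivAt_exp_smul_mul_mul_exp_neg_smul a x
  have hH0 : H 0 = x := by simp [H]
  have hlie : HasDerivAt (fun s => ⁅a, H s⁆) ⁅a, ⁅a, x⁆⁆ 0 := by
    simp only [Ring.lie_def]
    rw [← hH0]
    exact ((hH 0).const_mul a).sub ((hH 0).mul_const a)
  refine hasDerivWithinAt_comp_sqrt (g := fun s => f (H s)) (g' := fun s => f ⁅a, H s⁆)
    (fun s _ => (f.hasFDerivAt.comp_hasDerivAt s (hH s)).hasDerivWithinAt) (by simpa [hH0]) ?_
  exact (f.hasFDerivAt.comp_hasDerivAt 0 hlie).hasDerivWithinAt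

end

noncomputable def ptraceALinearMap : Matrix (n × Fin 2) (n × Fin 2) ℂ →ₗ[ℂ] Matrix n n ℂ where
  toFun := ptraceA
  map_add' X Y := by ext; simp [ptraceA, Finset.sum_add_distrib]
  map_smul' c X := by ext; simp [ptraceA, mul_add]

omit [Fintype n] [DecidableEq n] in
@[simp]
theorem ptraceA_sub (X Y : Matrix (n × Fin 2) (n × Fin 2) ℂ) :
    ptraceA (X - Y) = ptraceA X - ptraceA Y :=
  map_sub ptraceALinearMap X Y

omit [Fintype n] [DecidableEq n] in
theorem ptraceA_smul (c : ℂ) (X : Matrix (n × Fin 2) (n × Fin 2) ℂ) :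
    ptraceA (c • X) = c • ptraceA X :=
  map_smul ptraceALinearMap c X

omit [Fintype n] [DecidableEq n] in
@[simp]
theorem ptraceA_kronecker_single (A : Matrix n n ℂ) (a b : Fin 2) :
    ptraceA (A ⊗ₖ single a b 1) = if a = b then A else 0 := by
  ext i j
  fin_cases a <;> fin_cases b <;> simp [ptraceA, single, Fin.sum_univ_two]

section

attribute [local instance] LieRing.ofAssociativeRing

theorem lie_J_sigma0 (L ρ : Matrix n n ℂ) :
    ⁅J L, sigma0 ρ⁆ = (L * ρ) ⊗ₖ single 1 0 1 - (ρ * Lᴴ) ⊗ₖ single 0 1 1 := by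
  simp [J, sigma0, Ring.lie_def, add_mul, mul_add, ← mul_kronecker_mul, single_mul_single_of_ne]

theorem lie_J_lie_J_sigma0 (L ρ : Matrix n n ℂ) :
    ⁅J L, ⁅J L, sigma0 ρ⁆⁆ = (Lᴴ * L * ρ + ρ * (Lᴴ * L)) ⊗ₖ single 0 0 1
      - ((2 : ℂ) • (L * ρ * Lᴴ)) ⊗ₖ single 1 1 1 := by
  rw [lie_J_sigma0]
  simp only [J, Ring.lie_def, mul_add, add_mul, mul_sub, sub_mul, mul_assoc, ← mul_kronecker_mul,
    single_mul_single_same, single_mul_single_of_ne, ne_eq, zero_ne_one, one_ne_zero,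
    not_false_eq_true, implies_true, mul_one, mul_zero, kroneckerMap_zero_right, add_zero, zero_add,
    sub_zero, zero_sub, add_kronecker, two_smul, Fin.isValue]
  abel

theorem ptraceA_lie_J_kronecker_single_self (L A : Matrix n n ℂ) (a : Fin 2) :
    ptraceA ⁅J L, A ⊗ₖ single a a 1⁆ = 0 := by
  fin_cases a <;>
    simp [J, Ring.lie_def, add_mul, mul_add, ← mul_kronecker_mul, single_mul_single_of_ne]

theorem ptraceA_lie_J_sigma0 (L ρ : Matrix n n ℂ) : ptraceA ⁅J L, sigma0 ρ⁆ = 0 := by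
  simp [lie_J_sigma0]

theorem ptraceA_lie_J_lie_J_lie_J_sigma0 (L ρ : Matrix n n ℂ) :
    ptraceA ⁅J L, ⁅J L, ⁅J L, sigma0 ρ⁆⁆⁆ = 0 := by
  rw [lie_J_lie_J_sigma0, lie_sub, ptraceA_sub, ptraceA_lie_J_kronecker_single_self,
    ptraceA_lie_J_kronecker_single_self, sub_zero]

theorem ptraceA_lie_J_lie_J_sigma0 (L ρ : Matrix n n ℂ) :
    ptraceA ⁅J L, ⁅J L, sigma0 ρ⁆⁆ = -(2 : ℂ) • lindbladian L ρ := by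
  rw [lie_J_lie_J_sigma0, ptraceA_sub, ptraceA_kronecker_single, ptraceA_kronecker_single,
    if_pos rfl, if_pos rfl, lindbladian]
  module

theorem ptraceA_lie_neg_I_smul_J_sigma0 (L ρ : Matrix n n ℂ) :
    ptraceA ⁅(-Complex.I) • J L, sigma0 ρ⁆ = 0 := by
  rw [smul_lie, ptraceA_smul, ptraceA_lie_J_sigma0, smul_zero]

theorem ptraceA_lie_lie_neg_I_smul_J_sigma0 (L ρ : Matrix n n ℂ) :
    ptraceA ⁅(-Complex.I) • J L, ⁅(-Complex.I) • J L, sigma0 ρ⁆⁆ =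
      (2 : ℂ) • lindbladian L ρ := by
  rw [smul_lie, smul_lie, lie_smul, smul_smul, ptraceA_smul, ptraceA_lie_J_lie_J_sigma0,
    smul_smul]
  norm_num

end

theorem dil_eq_ptraceA_exp_conj (L ρ : Matrix n n ℂ) (t : ℝ) :
    dil L ρ t = ptraceA (exp (√t • ((-Complex.I) • J L)) * sigma0 ρ
      * exp (-(√t • ((-Complex.I) • J L)))) := by
  have h1 : ((-Complex.I) * (√t : ℂ)) • J L = √t • ((-Complex.I) • J L) := by
    ext
    simp only [Matrix.smul_apply, smul_eq_mul, Complex.real_smul]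
    ring
  have h2 : (Complex.I * (√t : ℂ)) • J L = -(√t • ((-Complex.I) • J L)) := by
    ext
    simp only [Matrix.smul_apply, Matrix.neg_apply, smul_eq_mul, Complex.real_smul]
    ring
  rw [dil, h1, h2]

theorem hasDerivWithinAt_dil_apply (L ρ : Matrix n n ℂ) (i j : n) :
    HasDerivWithinAt (fun t : ℝ => dil L ρ t i j) (lindbladian L ρ i j) (Ici 0) 0 := by
  -- any norm will do: only the topology enters `exp` and the derivatives
  let _ : NormedRing (Matrix (n × Fin 2) (n × Fin 2) ℂ) := Matrix.linftyOpNormedRing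
  let _ : NormedAlgebra ℝ (Matrix (n × Fin 2) (n × Fin 2) ℂ) := Matrix.linftyOpNormedAlgebra
  let f : Matrix (n × Fin 2) (n × Fin 2) ℂ →L[ℝ] ℂ := LinearMap.toContinuousLinearMap
    ((entryLinearMap ℂ ℂ i j ∘ₗ ptraceALinearMap).restrictScalars ℝ)
  have key := hasDerivWithinAt_map_exp_conj_sqrt f (a := (-Complex.I) • J L) (x := sigma0 ρ)
    (congr_fun₂ (ptraceA_lie_neg_I_smul_J_sigma0 L ρ) i j)
  have hdil : (fun t : ℝ => dil L ρ t i j) = fun t =>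
      f (exp (√t • ((-Complex.I) • J L)) * sigma0 ρ * exp (-(√t • ((-Complex.I) • J L)))) :=
    funext fun t => congr_fun₂ (dil_eq_ptraceA_exp_conj L ρ t) i j
  have hlind : lindbladian L ρ i j
      = (2 : ℝ)⁻¹ • f ⁅(-Complex.I) • J L, ⁅(-Complex.I) • J L, sigma0 ρ⁆⁆ := by
    have h2 : f ⁅(-Complex.I) • J L, ⁅(-Complex.I) • J L, sigma0 ρ⁆⁆ = 2 * lindbladian L ρ i j :=
      congr_fun₂ (ptraceA_lie_lie_neg_I_smul_J_sigma0 L ρ) i j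
    rw [h2]
    simp
  rw [hdil, hlind]
  exact key

/-- Second-order quantum-jump expansion: the half-integer power (odd-commutator) terms vanish
after the partial trace, and the first-order-in-`t` term of the dilation channel equals the
Lindbladian. -/
theorem dilation_first_order (L ρ : Matrix n n ℂ) :
    ptraceA (J L * sigma0 ρ - sigma0 ρ * J L) = 0 ∧
      ptraceA (J L * (J L * (J L * sigma0 ρ - sigma0 ρ * J L)
            - (J L * sigma0 ρ - sigma0 ρ * J L) * J L)
          - (J L * (J L * sigma0 ρ - sigma0 ρ * J L)
            - (J L * sigma0 ρ - sigma0 ρ * J L) * J L) * J L) = 0 ∧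
      ∀ i j : n, HasDerivWithinAt (fun t : ℝ => dil L ρ t i j) (lindbladian L ρ i j)
        (Set.Ici (0 : ℝ)) 0 :=
  ⟨ptraceA_lie_J_sigma0 L ρ, ptraceA_lie_J_lie_J_lie_J_sigma0 L ρ, hasDerivWithinAt_dil_apply L ρ⟩

end Stmt16
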